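/- There is a unique ℤ-linear endomorphism σ of L with σ(h) = f and σ(e_i) = d_i for all 1 ≤ i ≤ 10, and this σ is an involution (σ ∘ σ = id), preserves the bilinear form (⟨σx, σy⟩ = ⟨x, y⟩ for all x, y ∈ L), and fixes K (σ(K) = K). In other words, d_i and f are the images of e_i and h under a reflection of the lattice that preserves the intersection product and fixes the canonical class. -/

import Mathlib

/-- The lattice `L = ℤ^{11}` with basis `h, e₁, …, e₁₀`. -/
abbrev L : Type := Fin 11 → ℤ

/-- The hyperplane class `h`. -/
def h : L := fun j => if j = 0 then 1 else 0

/-- The exceptional classes `e i` for `i = 1, …, 10`. -/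
def e (i : Fin 10) : L := fun j => if j = i.succ then 1 else 0

/-- The intersection form: `⟨h,h⟩ = 1`, `⟨eᵢ,eᵢ⟩ = -1`, off-diagonal zero. -/
def form (x y : L) : ℤ := x 0 * y 0 - ∑ i : Fin 10, x i.succ * y i.succ

/-- The canonical class `K = -3h + ∑ eᵢ`. -/
def K : L := (-3 : ℤ) • h + ∑ i : Fin 10, e i

/-- `f = -19h + 6∑ eᵢ`. -/
def f : L := (-19 : ℤ) • h + (6 : ℤ) • ∑ i : Fin 10, e i

/-- `d i = -6h + 2∑ eⱼ - eᵢ`. -/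
def d (i : Fin 10) : L := (-6 : ℤ) • h + (2 : ℤ) • ∑ j : Fin 10, e j - e i

/-!
`K² = -1`, so `L ⊗ ℚ = ℚK ⊕ K^⊥` and the map acting by `+1` on `K` and by `-1` on `K^⊥` is
`σ x = -x - 2⟨x, K⟩ K`, the negative of the reflection in `K`. It is integral, an involution and an
isometry, and since `⟨h, K⟩ = -3` and `⟨eᵢ, K⟩ = -1` it sends `h ↦ 6K - h = f` and
`eᵢ ↦ 2K - eᵢ = dᵢ`.
-/

open Module

namespace LinearMap.BilinForm

variable {R M : Type*} [CommRing R] [AddCommGroup M] [Module R M]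
  {B : LinearMap.BilinForm R M} {x : M}

/-- `y ↦ 2 B(y, x) / B(x, x)`; junk (zero) unless `B x x` is a unit. -/
noncomputable def reflectionFunctional (B : LinearMap.BilinForm R M) (x : M) : Dual R M :=
  (2 * Ring.inverse (B x x)) • B.flip x

lemma reflectionFunctional_apply (B : LinearMap.BilinForm R M) (x y : M) :
    B.reflectionFunctional x y = 2 * Ring.inverse (B x x) * B y x :=
  rfl

lemma reflectionFunctional_apply_self (hx : IsUnit (B x x)) : B.reflectionFunctional x x = 2 := by
  rw [reflectionFunctional_apply, mul_assoc, Ring.inverse_mul_cancel _ hx, mul_one]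

lemma isOrthogonal_preReflection (hB : B.IsSymm) (hx : IsUnit (B x x)) :
    B.IsOrthogonal (preReflection x (B.reflectionFunctional x)) := by
  intro y z
  have hinv := Ring.inverse_mul_cancel _ hx
  simp only [preReflection_apply, reflectionFunctional_apply, map_sub, map_smul,
    LinearMap.sub_apply, LinearMap.smul_apply, smul_eq_mul]
  rw [hB.eq x z]
  linear_combination (4 * Ring.inverse (B x x) * B y x * B z x) * hinv

end LinearMap.BilinForm

lemma form_add_left (x x' y : L) : form (x + x') y = form x y + form x' y := by
  simp only [form, Pi.add_apply, add_mul, Finset.sum_add_distrib]; ring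

lemma form_smul_left (c : ℤ) (x y : L) : form (c • x) y = c * form x y := by
  simp only [form, Pi.smul_apply, smul_eq_mul, mul_assoc, ← Finset.mul_sum]; ring

lemma form_comm (x y : L) : form x y = form y x := by
  simp only [form, mul_comm]

def formBilin : LinearMap.BilinForm ℤ L :=
  LinearMap.mk₂ ℤ form form_add_left
    (fun c x y => (form_smul_left c x y).trans (smul_eq_mul ..).symm)
    (fun x y y' => by rw [form_comm, form_add_left, form_comm x, form_comm x])
    (fun c x y => by rw [form_comm, form_smul_left, form_comm, smul_eq_mul])

@[simp] lemma formBilin_apply (x y : L) : formBilin x y = form x y := rfl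

lemma formBilin_isSymm : formBilin.IsSymm :=
  ⟨fun x y => form_comm x y⟩

lemma form_K_K : form K K = -1 := by decide
lemma form_h_K : form h K = -3 := by decide
lemma form_e_K (i : Fin 10) : form (e i) K = -1 := by revert i; decide

lemma isUnit_formBilin_K_K : IsUnit (formBilin K K) := by
  rw [formBilin_apply, form_K_K]; exact isUnit_one.neg

lemma f_eq_smul_K_sub_h : f = (6 : ℤ) • K - h := by simp only [f, K]; module
lemma d_eq_smul_K_sub_e (i : Fin 10) : d i = (2 : ℤ) • K - e i := by simp only [d, K]; module

noncomputable def negReflectionK : L →ₗ[ℤ] L :=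
  -preReflection K (LinearMap.BilinForm.reflectionFunctional formBilin K)

lemma negReflectionK_apply (x : L) : negReflectionK x = -(2 * form x K) • K - x := by
  simp only [negReflectionK, LinearMap.neg_apply, preReflection_apply,
    LinearMap.BilinForm.reflectionFunctional_apply, formBilin_apply, form_K_K]
  rw [show Ring.inverse (-1 : ℤ) = -1 from Ring.inverse_unit (-1)]
  module

lemma negReflectionK_h : negReflectionK h = f := by
  rw [negReflectionK_apply, form_h_K, f_eq_smul_K_sub_h]; module

lemma negReflectionK_e (i : Fin 10) : negReflectionK (e i) = d i := by
  rw [negReflectionK_apply, form_e_K, d_eq_smul_K_sub_e]; module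

lemma negReflectionK_K : negReflectionK K = K := by
  rw [negReflectionK, LinearMap.neg_apply,
    preReflection_apply_self (formBilin.reflectionFunctional_apply_self isUnit_formBilin_K_K),
    neg_neg]

lemma negReflectionK_comp_self : negReflectionK ∘ₗ negReflectionK = LinearMap.id := by
  refine LinearMap.ext fun x => ?_
  simp only [negReflectionK, LinearMap.comp_apply, LinearMap.neg_apply, map_neg, neg_neg]
  exact involutive_preReflection (formBilin.reflectionFunctional_apply_self isUnit_formBilin_K_K) x

lemma form_negReflectionK (x y : L) : form (negReflectionK x) (negReflectionK y) = form x y := by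
  change formBilin (-_) (-_) = formBilin x y
  simp only [LinearMap.neg_apply, map_neg, neg_neg]
  exact formBilin.isOrthogonal_preReflection formBilin_isSymm isUnit_formBilin_K_K x y

lemma linearMap_ext_h_e {M : Type*} [AddCommGroup M] [Module ℤ M] {φ ψ : L →ₗ[ℤ] M}
    (hh : φ h = ψ h) (he : ∀ i, φ (e i) = ψ (e i)) : φ = ψ := by
  refine (Pi.basisFun ℤ (Fin 11)).ext fun j => ?_
  rw [Pi.basisFun_apply]
  refine Fin.cases ?_ (fun i => ?_) j
  · convert hh using 2 <;> ext j <;> simp [Pi.single_apply, h]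
  · convert he i using 2 <;> ext j <;> simp [Pi.single_apply, e]

theorem stmt_0 :
    (∃! σ : L →ₗ[ℤ] L, σ h = f ∧ ∀ i : Fin 10, σ (e i) = d i) ∧
    (∀ σ : L →ₗ[ℤ] L, (σ h = f ∧ ∀ i : Fin 10, σ (e i) = d i) →
      (σ ∘ₗ σ = LinearMap.id ∧ (∀ x y : L, form (σ x) (σ y) = form x y) ∧ σ K = K)) := by
  have eq_negReflectionK (σ : L →ₗ[ℤ] L) (hσ : σ h = f ∧ ∀ i, σ (e i) = d i) :
      σ = negReflectionK :=
    linearMap_ext_h_e (hσ.1.trans negReflectionK_h.symm) fun i =>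
      (hσ.2 i).trans (negReflectionK_e i).symm
  refine ⟨⟨negReflectionK, ⟨negReflectionK_h, negReflectionK_e⟩, eq_negReflectionK⟩, ?_⟩
  rintro σ hσ
  obtain rfl := eq_negReflectionK σ hσ
  exact ⟨negReflectionK_comp_self, form_negReflectionK, negReflectionK_K⟩
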